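/- Let Ω ⊂ ℝ² be open and let Y : Ω → ℝ⁵ be smooth with η(Y,Y) = 1 on Ω, harmonic into de Sitter space (ΔY = −|∇Y|²_η Y on Ω) and η-conformal on Ω. Identify ℝ² with ℂ via z = t + iθ and set ∂_z := ½(∂_t − i ∂_θ). Then the function z ↦ η_ℂ(∂²_zY(z), ∂²_zY(z)), where η_ℂ is the ℂ-bilinear extension of η to ℂ⁵, is holomorphic on Ω. -/

import Mathlib

noncomputable section

/-- ℝ⁵ with its euclidean norm. -/
abbrev E5 := EuclideanSpace ℝ (Fin 5)

/-- ℂ⁵. -/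
abbrev C5 := Fin 5 → ℂ

/-- The Minkowski bilinear form `η` on ℝ⁵. -/
def etaM (x y : E5) : ℝ := x 0 * y 0 + x 1 * y 1 + x 2 * y 2 + x 3 * y 3 - x 4 * y 4

/-- The ℂ-bilinear extension `η_ℂ` of `η` to ℂ⁵. -/
def etaC (x y : C5) : ℂ := x 0 * y 0 + x 1 * y 1 + x 2 * y 2 + x 3 * y 3 - x 4 * y 4

/-- Partial derivative `∂_t` (real direction) of a ℝ⁵-valued map on ℂ ≅ ℝ², `z = t + iθ`. -/
def pTR (f : ℂ → E5) (z : ℂ) : E5 := deriv (fun s : ℝ => f (z + (s : ℂ))) 0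

/-- Partial derivative `∂_θ` (imaginary direction) of a ℝ⁵-valued map on ℂ ≅ ℝ². -/
def pThR (f : ℂ → E5) (z : ℂ) : E5 := deriv (fun s : ℝ => f (z + (s : ℂ) * Complex.I)) 0

/-- Partial derivative `∂_t` of a ℂ⁵-valued map. -/
def pTC (f : ℂ → C5) (z : ℂ) : C5 := deriv (fun s : ℝ => f (z + (s : ℂ))) 0

/-- Partial derivative `∂_θ` of a ℂ⁵-valued map. -/
def pThC (f : ℂ → C5) (z : ℂ) : C5 := deriv (fun s : ℝ => f (z + (s : ℂ) * Complex.I)) 0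

/-- The Wirtinger derivative `∂_z := ½(∂_t − i∂_θ)`. -/
def dZ (f : ℂ → C5) (z : ℂ) : C5 := (1 / 2 : ℂ) • (pTC f z - Complex.I • pThC f z)

/-- The complexification of a ℝ⁵-valued map. -/
def complexify (Y : ℂ → E5) : ℂ → C5 := fun z i => ((Y z i : ℝ) : ℂ)

/-! Write `u = ∂_z X` and `Q = ∂_z u` for the complexification `X` of `Y`. Differentiating
`η(X, X) = 1` and `η(u, u) = 0` (conformality) gives `η(X, u) = η(X, Q) = η(u, Q) = 0`.
Harmonicity says `∂_z̄ u = ¼ ΔX = ρ X`, so `∂_z̄ Q = ∂_z ∂_z̄ u = (∂_z ρ) X + ρ u` is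
`η`-orthogonal to `Q`. Hence `∂_z̄ η(Q, Q) = 2 η(Q, ∂_z̄ Q) = 0`, which is the Cauchy–Riemann
equation for `η(Q, Q)`. -/

open Complex ContinuousLinearMap Filter Topology

section Smooth
variable {V F : Type*} [NormedAddCommGroup V] [NormedSpace ℝ V] [NormedAddCommGroup F]
  [NormedSpace ℝ F] {Ω : Set V} {f : V → F} {z : V}

lemma contDiffOn_fderiv_of_isOpen (hΩ : IsOpen Ω) (hf : ContDiffOn ℝ (⊤ : ℕ∞) f Ω) :
    ContDiffOn ℝ (⊤ : ℕ∞) (fderiv ℝ f) Ω :=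
  hf.fderiv_of_isOpen hΩ (le_of_eq rfl)

lemma ContDiffOn.differentiableAt_of_isOpen (hΩ : IsOpen Ω) (hf : ContDiffOn ℝ (⊤ : ℕ∞) f Ω)
    (hz : z ∈ Ω) : DifferentiableAt ℝ f z :=
  (hf.contDiffAt (hΩ.mem_nhds hz)).differentiableAt (by simp)

lemma lineDeriv_lineDeriv_of_isOpen (hΩ : IsOpen Ω) (hf : ContDiffOn ℝ (⊤ : ℕ∞) f Ω)
    (hz : z ∈ Ω) (v w : V) :
    lineDeriv ℝ (fun x => lineDeriv ℝ f x v) z w = fderiv ℝ (fderiv ℝ f) z w v := by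
  have h : (fun x => lineDeriv ℝ f x v) =ᶠ[𝓝 z] fun x => fderiv ℝ f x v := by
    filter_upwards [hΩ.mem_nhds hz] with x hx
    exact (hf.differentiableAt_of_isOpen hΩ hx).lineDeriv_eq_fderiv
  have hD := (contDiffOn_fderiv_of_isOpen hΩ hf).differentiableAt_of_isOpen hΩ hz
  rw [h.lineDeriv_eq, (hD.clm_apply (differentiableAt_const v)).lineDeriv_eq_fderiv,
    fderiv_clm_apply hD (differentiableAt_const v)]
  simp

end Smooth

section Wirtinger
variable {E : Type*} [NormedAddCommGroup E] [NormedSpace ℂ E] {Ω : Set ℂ} {z : ℂ}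

/-- `½ (∂_t F + c ∂_θ F)`: `c = -I` gives the Wirtinger derivative `∂_z`, `c = I` gives `∂_z̄`. -/
def partialComb (c : ℂ) (F : ℂ → E) (z : ℂ) : E :=
  (1 / 2 : ℂ) • (fderiv ℝ F z 1 + c • fderiv ℝ F z I)

@[simp] lemma partialComb_const (c : ℂ) (a : E) : partialComb c (fun _ : ℂ => a) = 0 := by
  ext z; simp [partialComb]

lemma partialComb_congr (hΩ : IsOpen Ω) {F G : ℂ → E} (h : Set.EqOn F G Ω) (c : ℂ)
    (hz : z ∈ Ω) : partialComb c F z = partialComb c G z := by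
  simp only [partialComb, (eventuallyEq_of_mem (hΩ.mem_nhds hz) h).fderiv_eq]

lemma ContDiffOn.partialComb (hΩ : IsOpen Ω) {F : ℂ → E} (hF : ContDiffOn ℝ (⊤ : ℕ∞) F Ω)
    (c : ℂ) : ContDiffOn ℝ (⊤ : ℕ∞) (partialComb c F) Ω := by
  have hDF := contDiffOn_fderiv_of_isOpen hΩ hF
  exact ((hDF.clm_apply contDiffOn_const).add
    ((hDF.clm_apply contDiffOn_const).const_smul c)).const_smul (1 / 2 : ℂ)

lemma fderiv_partialComb_apply {F : ℂ → E} (hF : DifferentiableAt ℝ (fderiv ℝ F) z) (c v : ℂ) :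
    fderiv ℝ (partialComb c F) z v
      = (1 / 2 : ℂ) • (fderiv ℝ (fderiv ℝ F) z v 1 + c • fderiv ℝ (fderiv ℝ F) z v I) := by
  have h : HasFDerivAt (partialComb c F) _ z :=
    ((hF.hasFDerivAt.clm_apply (hasFDerivAt_const 1 z)).add
      ((hF.hasFDerivAt.clm_apply (hasFDerivAt_const I z)).const_smul c)).const_smul (1 / 2 : ℂ)
  rw [h.fderiv]
  simp

lemma partialComb_partialComb (hΩ : IsOpen Ω) {F : ℂ → E} (hF : ContDiffOn ℝ (⊤ : ℕ∞) F Ω)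
    (hz : z ∈ Ω) (c c' : ℂ) :
    partialComb c (partialComb c' F) z = (1 / 4 : ℂ) • (fderiv ℝ (fderiv ℝ F) z 1 1
      + (c + c') • fderiv ℝ (fderiv ℝ F) z 1 I + (c * c') • fderiv ℝ (fderiv ℝ F) z I I) := by
  have hsymm : fderiv ℝ (fderiv ℝ F) z I 1 = fderiv ℝ (fderiv ℝ F) z 1 I :=
    (hF.contDiffAt (hΩ.mem_nhds hz)).isSymmSndFDerivAt
      (by simpa using WithTop.coe_le_coe.mpr (le_top : (2 : ℕ∞) ≤ ⊤)) I 1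
  have hD := (contDiffOn_fderiv_of_isOpen hΩ hF).differentiableAt_of_isOpen hΩ hz
  rw [partialComb, fderiv_partialComb_apply hD, fderiv_partialComb_apply hD, hsymm]
  module

lemma partialComb_comm (hΩ : IsOpen Ω) {F : ℂ → E} (hF : ContDiffOn ℝ (⊤ : ℕ∞) F Ω)
    (hz : z ∈ Ω) (c c' : ℂ) :
    partialComb c (partialComb c' F) z = partialComb c' (partialComb c F) z := by
  rw [partialComb_partialComb hΩ hF hz, partialComb_partialComb hΩ hF hz, add_comm c, mul_comm c]

variable {E' G : Type*} [NormedAddCommGroup E'] [NormedSpace ℂ E'] [NormedAddCommGroup G]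
  [NormedSpace ℂ G] (B : E →L[ℂ] E' →L[ℂ] G) {f : ℂ → E} {g : ℂ → E'}

lemma DifferentiableAt.bilin (hf : DifferentiableAt ℝ f z) (hg : DifferentiableAt ℝ g z) :
    DifferentiableAt ℝ (fun z => B (f z) (g z)) z :=
  ((B.bilinearRestrictScalars ℝ).isBoundedBilinearMap.differentiableAt _).comp z (hf.prodMk hg)

lemma partialComb_bilin (hf : DifferentiableAt ℝ f z) (hg : DifferentiableAt ℝ g z) (c : ℂ) :
    partialComb c (fun z => B (f z) (g z)) z
      = B (partialComb c f z) (g z) + B (f z) (partialComb c g z) := by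
  have h := (B.bilinearRestrictScalars ℝ).fderiv_of_bilinear hf hg
  simp only [partialComb, bilinearRestrictScalars_apply_apply] at h ⊢
  rw [h]
  simp only [one_div, precompR_apply, compL_apply, add_apply, comp_apply,
    bilinearRestrictScalars_apply_apply, precompL_apply, smul_add, map_add, map_smul, smul_apply]
  module

lemma differentiableAt_complex_of_partialComb_I_eq_zero (hf : DifferentiableAt ℝ f z)
    (h : partialComb I f z = 0) : DifferentiableAt ℂ f z := by
  refine differentiableAt_complex_iff_differentiableAt_real.2 ⟨hf, ?_⟩
  have h' : fderiv ℝ f z 1 + I • fderiv ℝ f z I = 0 :=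
    (smul_eq_zero.1 h).resolve_left (by norm_num)
  linear_combination (norm := skip) (-I) • h'
  simp only [smul_add, smul_smul, neg_mul, I_mul_I]
  module

end Wirtinger

section Quartic
variable {E : Type*} [NormedAddCommGroup E] [NormedSpace ℂ E] {B : E →L[ℂ] E →L[ℂ] ℂ}
  {Ω : Set ℂ}

lemma partialComb_bilin_self (hB : ∀ x y, B x y = B y x) {f : ℂ → E} {z : ℂ}
    (hf : DifferentiableAt ℝ f z) (c : ℂ) :
    partialComb c (fun z => B (f z) (f z)) z = 2 * B (f z) (partialComb c f z) := by
  rw [partialComb_bilin B hf hf, hB (partialComb c f z)]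
  ring

lemma bilin_partialComb_eq_zero_of_bilin_self_eq_const (hB : ∀ x y, B x y = B y x)
    (hΩ : IsOpen Ω) {f : ℂ → E} (hf : ContDiffOn ℝ (⊤ : ℕ∞) f Ω) {a : ℂ}
    (hconst : ∀ z ∈ Ω, B (f z) (f z) = a) (c : ℂ) {z : ℂ} (hz : z ∈ Ω) :
    B (f z) (partialComb c f z) = 0 := by
  have h := partialComb_bilin_self hB (hf.differentiableAt_of_isOpen hΩ hz) c
  rw [partialComb_congr hΩ (fun w hw => hconst w hw) c hz, partialComb_const] at h
  simpa using h.symm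

theorem differentiableOn_bilin_partialComb_partialComb (hB : ∀ x y, B x y = B y x)
    (hΩ : IsOpen Ω) {X : ℂ → E} (hX : ContDiffOn ℝ (⊤ : ℕ∞) X Ω)
    (hsph : ∀ z ∈ Ω, B (X z) (X z) = 1)
    (hharm : ∀ z ∈ Ω, ∃ r : ℂ, partialComb I (partialComb (-I) X) z = r • X z)
    (hconf : ∀ z ∈ Ω, B (partialComb (-I) X z) (partialComb (-I) X z) = 0) :
    DifferentiableOn ℂ (fun z => B (partialComb (-I) (partialComb (-I) X) z)
      (partialComb (-I) (partialComb (-I) X) z)) Ω := by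
  set u := partialComb (-I) X
  set Q := partialComb (-I) u
  have hu : ContDiffOn ℝ (⊤ : ℕ∞) u Ω := hX.partialComb hΩ (-I)
  have hQ : ContDiffOn ℝ (⊤ : ℕ∞) Q Ω := hu.partialComb hΩ (-I)
  have hXu : ∀ z ∈ Ω, B (X z) (u z) = 0 := fun z hz =>
    bilin_partialComb_eq_zero_of_bilin_self_eq_const hB hΩ hX hsph (-I) hz
  have huQ : ∀ z ∈ Ω, B (u z) (Q z) = 0 := fun z hz =>
    bilin_partialComb_eq_zero_of_bilin_self_eq_const hB hΩ hu hconf (-I) hz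
  have hXQ : ∀ z ∈ Ω, B (X z) (Q z) = 0 := by
    intro z hz
    have h := partialComb_bilin B (hX.differentiableAt_of_isOpen hΩ hz)
      (hu.differentiableAt_of_isOpen hΩ hz) (-I)
    rw [partialComb_congr hΩ (fun w hw => hXu w hw) (-I) hz, partialComb_const, hconf z hz] at h
    simpa using h.symm
  -- As `B (X, X) = 1`, the coefficient of `∂_z̄ u` along `X` is the smooth `B (∂_z̄ u, X)`.
  set ρ : ℂ → ℂ := fun z => B (partialComb I u z) (X z)
  have hρ : ∀ z ∈ Ω, partialComb I u z = ρ z • X z := by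
    intro z hz
    obtain ⟨r, hr⟩ := hharm z hz
    simp [ρ, hr, hsph z hz]
  have hρd : ∀ z ∈ Ω, DifferentiableAt ℝ ρ z := fun z hz =>
    ((hu.partialComb hΩ I).differentiableAt_of_isOpen hΩ hz).bilin B
      (hX.differentiableAt_of_isOpen hΩ hz)
  have hQbar : ∀ z ∈ Ω, partialComb I Q z = partialComb (-I) ρ z • X z + ρ z • u z := by
    intro z hz
    rw [partialComb_comm hΩ hu hz, partialComb_congr hΩ (fun w hw => hρ w hw) (-I) hz]
    exact partialComb_bilin (lsmul ℂ ℂ) (hρd z hz) (hX.differentiableAt_of_isOpen hΩ hz) (-I)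
  intro z hz
  have hQz := hQ.differentiableAt_of_isOpen hΩ hz
  refine (differentiableAt_complex_of_partialComb_I_eq_zero (hQz.bilin B hQz) ?_)
    |>.differentiableWithinAt
  rw [partialComb_bilin_self hB hQz, hQbar z hz, map_add, map_smul, map_smul, hB, hXQ z hz, hB,
    huQ z hz]
  simp

end Quartic

section DeSitter

lemma etaC_comm (x y : C5) : etaC x y = etaC y x := by
  simp only [etaC]; ring

lemma etaM_comm (x y : E5) : etaM x y = etaM y x := by
  simp only [etaM]; ring

lemma isBilinearMap_etaC : IsBilinearMap ℂ etaC where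
  add_left x y w := by simp only [etaC, Pi.add_apply]; ring
  smul_left c x y := by simp only [etaC, Pi.smul_apply, smul_eq_mul]; ring
  add_right x y w := by simp only [etaC, Pi.add_apply]; ring
  smul_right c x y := by simp only [etaC, Pi.smul_apply, smul_eq_mul]; ring

def etaCL : C5 →L[ℂ] C5 →L[ℂ] ℂ := isBilinearMap_etaC.toContinuousBilinearMap

@[simp] lemma etaCL_apply (x y : C5) : etaCL x y = etaC x y := rfl

def complexifyCLM : E5 →L[ℝ] C5 := pi fun i => ofRealCLM.comp (EuclideanSpace.proj i)

lemma complexify_eq (Y : ℂ → E5) : complexify Y = fun z => complexifyCLM (Y z) := rfl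

lemma etaC_complexifyCLM (x y : E5) :
    etaC (complexifyCLM x) (complexifyCLM y) = etaM x y := by
  simp [etaC, etaM, complexifyCLM]

lemma ContDiffOn.complexify {Ω : Set ℂ} {Y : ℂ → E5} (hY : ContDiffOn ℝ (⊤ : ℕ∞) Y Ω) :
    ContDiffOn ℝ (⊤ : ℕ∞) (complexify Y) Ω :=
  complexifyCLM.contDiff.comp_contDiffOn hY

lemma fderiv_complexify_apply {Y : ℂ → E5} {z : ℂ} (hY : DifferentiableAt ℝ Y z) (v : ℂ) :
    fderiv ℝ (complexify Y) z v = complexifyCLM (fderiv ℝ Y z v) := by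
  have h : HasFDerivAt (complexify Y) (complexifyCLM.comp (fderiv ℝ Y z)) z :=
    complexifyCLM.hasFDerivAt.comp z hY.hasFDerivAt
  rw [h.fderiv, comp_apply]

lemma fderiv_fderiv_complexify_apply {Ω : Set ℂ} (hΩ : IsOpen Ω) {Y : ℂ → E5}
    (hY : ContDiffOn ℝ (⊤ : ℕ∞) Y Ω) {z : ℂ} (hz : z ∈ Ω) (v w : ℂ) :
    fderiv ℝ (fderiv ℝ (complexify Y)) z v w
      = complexifyCLM (fderiv ℝ (fderiv ℝ Y) z v w) := by
  set L := compL ℝ ℂ E5 C5 complexifyCLM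
  have h : fderiv ℝ (complexify Y) =ᶠ[𝓝 z] fun x => L (fderiv ℝ Y x) := by
    filter_upwards [hΩ.mem_nhds hz] with x hx
    ext v
    simp [L, fderiv_complexify_apply (hY.differentiableAt_of_isOpen hΩ hx)]
  have hD := (contDiffOn_fderiv_of_isOpen hΩ hY).differentiableAt_of_isOpen hΩ hz
  have h2 : HasFDerivAt (fun x => L (fderiv ℝ Y x)) (L.comp (fderiv ℝ (fderiv ℝ Y) z)) z :=
    L.hasFDerivAt.comp z hD.hasFDerivAt
  rw [h.fderiv_eq, h2.fderiv]
  simp [L]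

lemma pTR_eq_lineDeriv (f : ℂ → E5) : pTR f = fun z => lineDeriv ℝ f z 1 := by
  ext z; simp [pTR, lineDeriv]

lemma pThR_eq_lineDeriv (f : ℂ → E5) : pThR f = fun z => lineDeriv ℝ f z I := rfl

lemma pTC_eq_lineDeriv (f : ℂ → C5) : pTC f = fun z => lineDeriv ℝ f z 1 := by
  ext z; simp [pTC, lineDeriv]

lemma pThC_eq_lineDeriv (f : ℂ → C5) : pThC f = fun z => lineDeriv ℝ f z I := rfl

lemma dZ_eq_partialComb {f : ℂ → C5} {z : ℂ} (hf : DifferentiableAt ℝ f z) :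
    dZ f z = partialComb (-I) f z := by
  simp [dZ, partialComb, pTC_eq_lineDeriv, pThC_eq_lineDeriv, hf.lineDeriv_eq_fderiv,
    sub_eq_add_neg]

lemma dZ_dZ_eq_partialComb_partialComb {Ω : Set ℂ} (hΩ : IsOpen Ω) {f : ℂ → C5}
    (hf : ContDiffOn ℝ (⊤ : ℕ∞) f Ω) {z : ℂ} (hz : z ∈ Ω) :
    dZ (dZ f) z = partialComb (-I) (partialComb (-I) f) z := by
  have h : dZ f =ᶠ[𝓝 z] partialComb (-I) f := by
    filter_upwards [hΩ.mem_nhds hz] with x hx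
    exact dZ_eq_partialComb (hf.differentiableAt_of_isOpen hΩ hx)
  rw [dZ_eq_partialComb (h.differentiableAt_iff.2
    ((hf.partialComb hΩ (-I)).differentiableAt_of_isOpen hΩ hz))]
  simp only [partialComb, h.fderiv_eq]

lemma partialComb_I_partialComb_complexify {Ω : Set ℂ} (hΩ : IsOpen Ω) {Y : ℂ → E5}
    (hY : ContDiffOn ℝ (⊤ : ℕ∞) Y Ω) {z : ℂ} (hz : z ∈ Ω) :
    partialComb I (partialComb (-I) (complexify Y)) z
      = (1 / 4 : ℂ) • complexifyCLM (pTR (pTR Y) z + pThR (pThR Y) z) := by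
  simp only [pTR_eq_lineDeriv, pThR_eq_lineDeriv, lineDeriv_lineDeriv_of_isOpen hΩ hY hz]
  rw [partialComb_partialComb hΩ hY.complexify hz]
  simp [fderiv_fderiv_complexify_apply hΩ hY hz]

lemma etaC_partialComb_complexify_self {Y : ℂ → E5} {z : ℂ} (hY : DifferentiableAt ℝ Y z) :
    etaC (partialComb (-I) (complexify Y) z) (partialComb (-I) (complexify Y) z)
      = (etaM (pTR Y z) (pTR Y z) - etaM (pThR Y z) (pThR Y z)
        - 2 * I * etaM (pTR Y z) (pThR Y z)) / 4 := by
  simp only [pTR_eq_lineDeriv, pThR_eq_lineDeriv, hY.lineDeriv_eq_fderiv]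
  rw [← etaCL_apply, partialComb, fderiv_complexify_apply hY, fderiv_complexify_apply hY]
  simp only [map_add, map_smul, add_apply, smul_apply, etaCL_apply, etaC_complexifyCLM,
    smul_eq_mul, etaM_comm (fderiv ℝ Y z I)]
  linear_combination (1 / 4 : ℂ) * etaM (fderiv ℝ Y z I) (fderiv ℝ Y z I) * I_sq

end DeSitter

/-- Bryant's quartic: for a smooth map `Y : Ω → ℝ⁵` into de Sitter space which is harmonic
(`ΔY = −|∇Y|²_η Y`) and `η`-conformal on `Ω`, the function `z ↦ η_ℂ(∂²_zY, ∂²_zY)` is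
holomorphic on `Ω`. -/
theorem stmt19 (Ω : Set ℂ) (hΩ : IsOpen Ω) (Y : ℂ → E5)
    (hsm : ContDiffOn ℝ (⊤ : ℕ∞) Y Ω)
    (hsph : ∀ z ∈ Ω, etaM (Y z) (Y z) = 1)
    (hharm : ∀ z ∈ Ω, pTR (pTR Y) z + pThR (pThR Y) z
      = -(etaM (pTR Y z) (pTR Y z) + etaM (pThR Y z) (pThR Y z)) • Y z)
    (hconf : ∀ z ∈ Ω, etaM (pTR Y z) (pTR Y z) = etaM (pThR Y z) (pThR Y z)
      ∧ etaM (pTR Y z) (pThR Y z) = 0) :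
    DifferentiableOn ℂ
      (fun z => etaC (dZ (dZ (complexify Y)) z) (dZ (dZ (complexify Y)) z)) Ω := by
  have hX : ContDiffOn ℝ (⊤ : ℕ∞) (complexify Y) Ω := hsm.complexify
  have hquartic := differentiableOn_bilin_partialComb_partialComb (B := etaCL) etaC_comm hΩ hX
    (fun z hz => by simp [complexify_eq, etaC_complexifyCLM, hsph z hz])
    (fun z hz => ⟨-(etaM (pTR Y z) (pTR Y z) + etaM (pThR Y z) (pThR Y z)) / 4, by
      rw [partialComb_I_partialComb_complexify hΩ hsm hz, hharm z hz, map_smul, complexify_eq]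
      module⟩)
    (fun z hz => by
      rw [etaCL_apply, etaC_partialComb_complexify_self (hsm.differentiableAt_of_isOpen hΩ hz),
        (hconf z hz).1, (hconf z hz).2]
      simp)
  refine hquartic.congr fun z hz => ?_
  simp only [etaCL_apply, dZ_dZ_eq_partialComb_partialComb hΩ hX hz]
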